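/- arXiv:1709.04197 — 2 statements merged into one kernel-verified Lean document; each statement's English description precedes it below -/
import Mathlib

section
/- Let B be a bounded operator on K which commutes with G (B maps Dom(G) into Dom(G) and BGφ = GBφ for φ ∈ Dom(G)). Assume the resolvent set of G contains the imaginary axis and β := sup_{τ∈ℝ} ‖(G+iτ)⁻¹ B‖ < ∞. Then for every ε > 0 and every τ ∈ ℝ, ‖(G − (ε − iτ))⁻¹ B‖ ≤ (1+M)β. -/
/-!
For `Re z = ε > 0` the orbit `f t = e^{-zt} S t x` of a domain vector has derivative
`e^{-zt} S t (G x - z x)`, of norm at most `M e^{-εt} ‖G x - z x‖`; integrating from `0` to `∞`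
gives the Hille–Yosida type bound `‖x‖ ≤ (M / ε) ‖(G - z) x‖`, i.e. `ε ‖(G - z)⁻¹‖ ≤ M`.
Writing `z = ε - iτ`, the resolvent identity `(G - z)⁻¹ = (G + iτ)⁻¹ + ε (G - z)⁻¹ (G + iτ)⁻¹`
factors `(G - z)⁻¹ B = (1 + ε (G - z)⁻¹) (G + iτ)⁻¹ B`, whose norm is at most `(1 + M) β`.
-/

open Set Filter Topology

section Calculus

variable {E : Type*} [NormedAddCommGroup E] [NormedSpace ℝ E]

theorem norm_sub_le_of_norm_deriv_le_exp {f f' : ℝ → E} {C ε T : ℝ} (hε : 0 < ε) (hT : 0 ≤ T)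
    (hf : ContinuousOn f (Icc 0 T)) (hf' : ∀ t ∈ Ico 0 T, HasDerivWithinAt f (f' t) (Ici t) t)
    (bound : ∀ t ∈ Ico 0 T, ‖f' t‖ ≤ C * Real.exp (-(ε * t))) :
    ‖f T - f 0‖ ≤ C / ε * (1 - Real.exp (-(ε * T))) := by
  have hB : ∀ t, HasDerivAt (fun s => C / ε * (1 - Real.exp (-(ε * s))))
      (C * Real.exp (-(ε * t))) t := fun t => by
    have hlin : HasDerivAt (fun s => -(ε * s)) (-ε) t := by
      simpa using ((hasDerivAt_id t).const_mul ε).fun_neg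
    refine ((hlin.exp.const_sub 1).const_mul (C / ε)).congr_deriv ?_
    field_simp
  refine image_norm_le_of_norm_deriv_right_le_deriv_boundary (hf.sub continuousOn_const)
    (fun t ht => (hf' t ht).sub_const _) (by simp) hB bound (right_mem_Icc.2 hT)

end Calculus

section Semigroup

variable {E : Type*} [NormedAddCommGroup E] [NormedSpace ℂ E]

theorem norm_cexp_neg_mul_smul (z : ℂ) (t : ℝ) (v : E) :
    ‖Complex.exp (-(z * t)) • v‖ = Real.exp (-(z.re * t)) * ‖v‖ := by
  simp [norm_smul, Complex.norm_exp]

theorem norm_le_div_re_mul_norm_sub_smul {S : ℝ → E →L[ℂ] E} {M : ℝ} (hS0 : S 0 = 1)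
    (hM : ∀ t, 0 ≤ t → ‖S t‖ ≤ M) {x y : E} (hcont : ContinuousOn (fun t => S t x) (Ici 0))
    (hderiv : ∀ t, 0 ≤ t → HasDerivWithinAt (fun s => S s x) (S t y) (Ici 0) t)
    {z : ℂ} (hz : 0 < z.re) : ‖x‖ ≤ M / z.re * ‖y - z • x‖ := by
  set ε := z.re
  set f : ℝ → E := fun t => Complex.exp (-(z * t)) • S t x
  have hM0 : 0 ≤ M := (norm_nonneg _).trans (hM 0 le_rfl)
  have hS_le : ∀ t, 0 ≤ t → ∀ v, ‖S t v‖ ≤ M * ‖v‖ := fun t ht v =>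
    (S t).le_of_opNorm_le (hM t ht) v
  have hf' : ∀ t : ℝ, 0 ≤ t →
      HasDerivWithinAt f (Complex.exp (-(z * t)) • S t (y - z • x)) (Ici 0) t := fun t ht => by
    have hexp : HasDerivAt (fun s : ℝ => Complex.exp (-(z * s))) (Complex.exp (-(z * t)) * -z) t :=
      ((Complex.ofRealCLM.hasDerivAt.const_mul z).neg.congr_deriv (by simp)).cexp
    refine (hexp.hasDerivWithinAt.smul (hderiv t ht)).congr_deriv ?_
    simp only [map_sub, map_smul, smul_sub, smul_smul]
    module
  have hdiff : ∀ T, 0 ≤ T → ‖f T - x‖ ≤ M * ‖y - z • x‖ / ε := fun T hT => by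
    have hcont_f : ContinuousOn f (Icc 0 T) :=
      (Continuous.continuousOn (by fun_prop)).smul (hcont.mono Icc_subset_Ici_self)
    have := norm_sub_le_of_norm_deriv_le_exp (C := M * ‖y - z • x‖) hz hT hcont_f
      (fun t ht => (hf' t ht.1).mono (Ici_subset_Ici.2 ht.1)) fun t ht => by
        rw [norm_cexp_neg_mul_smul, mul_comm]
        exact mul_le_mul_of_nonneg_right (hS_le t ht.1 _) (Real.exp_nonneg _)
    have hf0 : f 0 = x := by simp [f, hS0]
    rw [hf0] at this
    refine this.trans (mul_le_of_le_one_right (by positivity) ?_)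
    linarith [Real.exp_nonneg (-(ε * T))]
  have hsplit : ∀ T, 0 ≤ T → ‖x‖ ≤ Real.exp (-(ε * T)) * (M * ‖x‖) + M * ‖y - z • x‖ / ε :=
    fun T hT => calc
      ‖x‖ ≤ ‖f T‖ + ‖f T - x‖ := by simpa [norm_sub_rev] using norm_le_norm_add_norm_sub' x (f T)
      _ ≤ _ := by
        gcongr
        · rw [norm_cexp_neg_mul_smul]
          exact mul_le_mul_of_nonneg_left (hS_le T hT x) (Real.exp_nonneg _)
        · exact hdiff T hT
  have hlim : Tendsto (fun T => Real.exp (-(ε * T)) * (M * ‖x‖) + M * ‖y - z • x‖ / ε) atTop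
      (𝓝 (M / ε * ‖y - z • x‖)) := by
    have := ((Real.tendsto_exp_neg_atTop_nhds_zero.comp (tendsto_id.const_mul_atTop hz)).mul_const
      (M * ‖x‖)).add_const (M * ‖y - z • x‖ / ε)
    convert this using 2 <;> simp [div_mul_eq_mul_div]
  exact ge_of_tendsto hlim (eventually_atTop.2 ⟨0, hsplit⟩)

end Semigroup

theorem ContinuousLinearMap.norm_comp_le_of_eq_add_smul_comp {𝕜 E : Type*} [RCLike 𝕜]
    [NormedAddCommGroup E] [NormedSpace 𝕜 E] {T R : E →L[𝕜] E} {ε M : ℝ} (hε : 0 ≤ ε)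
    (hT : ε * ‖T‖ ≤ M) (h : T = R + (ε : 𝕜) • (T ∘L R)) (B : E →L[𝕜] E) :
    ‖T ∘L B‖ ≤ (1 + M) * ‖R ∘L B‖ := by
  have hfactor : T ∘L B = (1 + (ε : 𝕜) • T) ∘L (R ∘L B) := by
    conv_lhs => rw [h]
    ext v
    simp
  calc ‖T ∘L B‖ ≤ ‖1 + (ε : 𝕜) • T‖ * ‖R ∘L B‖ := hfactor ▸ opNorm_comp_le _ _
    _ ≤ (1 + M) * ‖R ∘L B‖ := by
      gcongr
      calc ‖1 + (ε : 𝕜) • T‖ ≤ ‖(1 : E →L[𝕜] E)‖ + ε * ‖T‖ := by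
            simpa [norm_smul, abs_of_nonneg hε] using norm_add_le (1 : E →L[𝕜] E) ((ε : 𝕜) • T)
        _ ≤ 1 + M := add_le_add norm_id_le hT

theorem shifted_resolvent_bound_general
    {K : Type*} [NormedAddCommGroup K] [InnerProductSpace ℂ K]
    (dom : Submodule ℂ K)
    (G : dom →ₗ[ℂ] K)
    -- the semigroup
    (S : ℝ → K →L[ℂ] K)
    (hS0 : S 0 = 1)
    (hScont : ∀ φ : K, ContinuousOn (fun t => S t φ) (Set.Ici (0:ℝ)))
    -- `G` is its infinitesimal generator
    (hSderiv : ∀ φ : dom, ∀ t : ℝ, 0 ≤ t →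
      HasDerivWithinAt (fun s : ℝ => S s (φ : K)) (S t (G φ)) (Set.Ici (0:ℝ)) t)
    -- boundedness of the semigroup
    (M : ℝ) (hM : ∀ t : ℝ, 0 ≤ t → ‖S t‖ ≤ M)
    -- `B` is a bounded operator commuting with `G`
    (B : K →L[ℂ] K)
    -- the imaginary axis is in the resolvent set: `R τ = (G + iτ)⁻¹`
    (R : ℝ → K →L[ℂ] K)
    (hRmem : ∀ (τ : ℝ) (φ : K), R τ φ ∈ dom)
    (hRright : ∀ (τ : ℝ) (φ : K),
      G ⟨R τ φ, hRmem τ φ⟩ + (Complex.I * (τ : ℂ)) • R τ φ = φ)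
    -- `β = sup_τ ‖(G + iτ)⁻¹ B‖ < ∞`
    (β : ℝ) (hβ : ∀ τ : ℝ, ‖R τ ∘L B‖ ≤ β)
    -- `Rz ε τ = (G - (ε - iτ))⁻¹` for `ε > 0`
    (Rz : ℝ → ℝ → (K →L[ℂ] K))
    (hRzmem : ∀ (ε τ : ℝ), 0 < ε → ∀ φ : K, Rz ε τ φ ∈ dom)
    (hRzright : ∀ (ε τ : ℝ) (hε : 0 < ε) (φ : K),
      G ⟨Rz ε τ φ, hRzmem ε τ hε φ⟩ - ((ε : ℂ) - Complex.I * (τ : ℂ)) • Rz ε τ φ = φ)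
    (hRzleft : ∀ (ε τ : ℝ), 0 < ε → ∀ φ : dom,
      Rz ε τ (G φ - ((ε : ℂ) - Complex.I * (τ : ℂ)) • (φ : K)) = φ) :
    ∀ (ε τ : ℝ), 0 < ε → ‖Rz ε τ ∘L B‖ ≤ (1 + M) * β := by
  intro ε τ hε
  have hM0 : 0 ≤ M := (norm_nonneg _).trans (hM 0 le_rfl)
  set z : ℂ := (ε : ℂ) - Complex.I * (τ : ℂ)
  have hz : z.re = ε := by simp [z]
  have hRz : ε * ‖Rz ε τ‖ ≤ M := by
    rw [← le_div_iff₀' hε]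
    refine ContinuousLinearMap.opNorm_le_bound _ (by positivity) fun φ => ?_
    have := norm_le_div_re_mul_norm_sub_smul hS0 hM (hScont _) (hSderiv ⟨_, hRzmem ε τ hε φ⟩)
      (hz ▸ hε : 0 < z.re)
    rwa [hRzright ε τ hε φ, hz] at this
  have hresolvent : Rz ε τ = R τ + (ε : ℂ) • (Rz ε τ ∘L R τ) := by
    ext φ
    have hshift : G ⟨R τ φ, hRmem τ φ⟩ - z • R τ φ = φ - (ε : ℂ) • R τ φ := by
      rw [eq_sub_of_add_eq (hRright τ φ)]
      module
    have h := hRzleft ε τ hε ⟨R τ φ, hRmem τ φ⟩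
    rw [hshift, map_sub, map_smul] at h
    simpa using sub_eq_iff_eq_add.mp h
  calc ‖Rz ε τ ∘L B‖ ≤ (1 + M) * ‖R τ ∘L B‖ :=
        ContinuousLinearMap.norm_comp_le_of_eq_add_smul_comp hε.le hRz hresolvent B
    _ ≤ (1 + M) * β := by gcongr; exact hβ τ

/-- Let `G` generate a bounded `C₀`-semigroup on a Hilbert space `K` with
`sup ‖S t‖ ≤ M`, and let `B` be a bounded operator commuting with `G` such that
`β = sup_τ ‖(G+iτ)⁻¹B‖ < ∞`. Then for every `ε > 0` and `τ ∈ ℝ`,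
`‖(G - (ε - iτ))⁻¹ B‖ ≤ (1+M)β`. -/
theorem shifted_resolvent_bound
    {K : Type*} [NormedAddCommGroup K] [InnerProductSpace ℂ K] [CompleteSpace K]
    (dom : Submodule ℂ K) (hdense : Dense (dom : Set K))
    (G : dom →ₗ[ℂ] K)
    -- the semigroup
    (S : ℝ → K →L[ℂ] K)
    (hS0 : S 0 = 1)
    (hSadd : ∀ t s : ℝ, 0 ≤ t → 0 ≤ s → S (t + s) = S t ∘L S s)
    (hScont : ∀ φ : K, ContinuousOn (fun t => S t φ) (Set.Ici (0:ℝ)))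
    -- `G` is its infinitesimal generator
    (hSdom : ∀ φ : dom, ∀ t : ℝ, 0 ≤ t → S t (φ : K) ∈ dom)
    (hSderiv : ∀ φ : dom, ∀ t : ℝ, 0 ≤ t →
      HasDerivWithinAt (fun s : ℝ => S s (φ : K)) (S t (G φ)) (Set.Ici (0:ℝ)) t)
    (hgen : ∀ φ : K, (∃ ψ : K, HasDerivWithinAt (fun s : ℝ => S s φ) ψ (Set.Ici (0:ℝ)) 0)
      → φ ∈ dom)
    -- boundedness of the semigroup
    (M : ℝ) (hM : ∀ t : ℝ, 0 ≤ t → ‖S t‖ ≤ M)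
    -- `B` is a bounded operator commuting with `G`
    (B : K →L[ℂ] K)
    (hBdom : ∀ φ : dom, B (φ : K) ∈ dom)
    (hBcomm : ∀ φ : dom, G ⟨B (φ : K), hBdom φ⟩ = B (G φ))
    -- the imaginary axis is in the resolvent set: `R τ = (G + iτ)⁻¹`
    (R : ℝ → K →L[ℂ] K)
    (hRmem : ∀ (τ : ℝ) (φ : K), R τ φ ∈ dom)
    (hRright : ∀ (τ : ℝ) (φ : K),
      G ⟨R τ φ, hRmem τ φ⟩ + (Complex.I * (τ : ℂ)) • R τ φ = φ)
    (hRleft : ∀ (τ : ℝ) (φ : dom),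
      R τ (G φ + (Complex.I * (τ : ℂ)) • (φ : K)) = φ)
    -- `β = sup_τ ‖(G + iτ)⁻¹ B‖ < ∞`
    (β : ℝ) (hβ : ∀ τ : ℝ, ‖R τ ∘L B‖ ≤ β)
    -- `Rz ε τ = (G - (ε - iτ))⁻¹` for `ε > 0`
    (Rz : ℝ → ℝ → (K →L[ℂ] K))
    (hRzmem : ∀ (ε τ : ℝ), 0 < ε → ∀ φ : K, Rz ε τ φ ∈ dom)
    (hRzright : ∀ (ε τ : ℝ) (hε : 0 < ε) (φ : K),
      G ⟨Rz ε τ φ, hRzmem ε τ hε φ⟩ - ((ε : ℂ) - Complex.I * (τ : ℂ)) • Rz ε τ φ = φ)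
    (hRzleft : ∀ (ε τ : ℝ), 0 < ε → ∀ φ : dom,
      Rz ε τ (G φ - ((ε : ℂ) - Complex.I * (τ : ℂ)) • (φ : K)) = φ) :
    ∀ (ε τ : ℝ), 0 < ε → ‖Rz ε τ ∘L B‖ ≤ (1 + M) * β :=
  shifted_resolvent_bound_general dom G S hS0 hScont hSderiv M hM B R hRmem hRright β hβ Rz hRzmem
    hRzright hRzleft
end

section
/- Assume a satisfies the geometric control condition with constants T > 0 and α > 0, i.e. (1/T)∫₀^T a(x+2tξ) dt ≥ α for all x ∈ ℝ^d and all ξ ∈ S^{d−1}. Then for every η ≥ 1, every x ∈ ℝ^d and every ξ ∈ S^{d−1}, one has (1/T)∫₀^T a_η(x+2tξ) dt ≥ α/2; that is, the functions a_η satisfy the geometric control condition with constants T and α/2 uniformly in η ≥ 1. -/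
open MeasureTheory

noncomputable section

namespace KG

/-- `i`-th partial derivative of a function on `ℝ^d`. -/
def pd {d : ℕ} (f : EuclideanSpace ℝ (Fin d) → ℂ) (i : Fin d)
    (x : EuclideanSpace ℝ (Fin d)) : ℂ :=
  fderiv ℝ f x (EuclideanSpace.single i 1)

/-- The Laplacian, as the sum of the second partial derivatives. -/
def laplacian {d : ℕ} (f : EuclideanSpace ℝ (Fin d) → ℂ)
    (x : EuclideanSpace ℝ (Fin d)) : ℂ :=
  ∑ i : Fin d, fderiv ℝ (pd f i) x (EuclideanSpace.single i 1)

/-- Square of the `L²` norm. -/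
def L2sq {d : ℕ} (f : EuclideanSpace ℝ (Fin d) → ℂ) : ℝ := ∫ x, ‖f x‖ ^ 2

/-- The `L²` norm. -/
def L2norm {d : ℕ} (f : EuclideanSpace ℝ (Fin d) → ℂ) : ℝ := Real.sqrt (L2sq f)

/-- Square of the norm of the gradient at a point. -/
def gradSq {d : ℕ} (f : EuclideanSpace ℝ (Fin d) → ℂ)
    (x : EuclideanSpace ℝ (Fin d)) : ℝ := ∑ i : Fin d, ‖pd f i x‖ ^ 2

/-- Square of the `H¹` norm `‖∇u‖² + m ‖u‖²`. -/
def H1normSq {d : ℕ} (m : ℝ) (f : EuclideanSpace ℝ (Fin d) → ℂ) : ℝ :=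
  (∫ x, gradSq f x) + m * L2sq f

/-- The `H¹` norm. -/
def H1norm {d : ℕ} (m : ℝ) (f : EuclideanSpace ℝ (Fin d) → ℂ) : ℝ :=
  Real.sqrt (H1normSq m f)

/-- The norm of the energy space `𝓗 = H¹ × L²`. -/
def Hnorm {d : ℕ} (m : ℝ) (u v : EuclideanSpace ℝ (Fin d) → ℂ) : ℝ :=
  Real.sqrt (H1normSq m u + L2sq v)

/-- Membership in `L²`. -/
def MemL2 {d : ℕ} (f : EuclideanSpace ℝ (Fin d) → ℂ) : Prop := MemLp f 2 volume

/-- Membership in `H¹` (classical-derivative version). -/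
def MemH1 {d : ℕ} (f : EuclideanSpace ℝ (Fin d) → ℂ) : Prop :=
  Differentiable ℝ f ∧ MemL2 f ∧ ∀ i, MemL2 (pd f i)

/-- Membership in `H²` (classical-derivative version). -/
def MemH2 {d : ℕ} (f : EuclideanSpace ℝ (Fin d) → ℂ) : Prop :=
  ContDiff ℝ 2 f ∧ MemH1 f ∧ MemL2 (laplacian f)

/-- `ℤ^d`-periodicity. -/
def ZdPeriodic {d : ℕ} (a : EuclideanSpace ℝ (Fin d) → ℝ) : Prop :=
  ∀ (x : EuclideanSpace ℝ (Fin d)) (n : Fin d → ℤ),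
    a (x + ∑ i : Fin d, (n i : ℝ) • EuclideanSpace.single i 1) = a x

/-- Time average of `a` along the ray `t ↦ x + 2tξ`. -/
def avg {d : ℕ} (a : EuclideanSpace ℝ (Fin d) → ℝ) (T : ℝ)
    (x ξ : EuclideanSpace ℝ (Fin d)) : ℝ :=
  (1 / T) * ∫ t in (0:ℝ)..T, a (x + (2 * t) • ξ)

/-- The geometric control condition with constants `T` and `α`. -/
def GCC {d : ℕ} (a : EuclideanSpace ℝ (Fin d) → ℝ) (T α : ℝ) : Prop :=
  ∀ x ξ : EuclideanSpace ℝ (Fin d), ‖ξ‖ = 1 → α ≤ avg a T x ξ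

end KG

/-! Rescaling time by `η` turns the average of `a_η` over `[0, T]` along a ray into the average
of `a` over `[0, ηT]` along another ray. This window contains `⌊η⌋ ≥ η/2` consecutive windows of
length `T`, on each of which the geometric control condition bounds the average by `α`, and
`a ≥ 0` on the remainder. -/

theorem mul_le_intervalIntegral_of_forall_le_integral_add {f : ℝ → ℝ}
    (hf : ∀ u v, IntervalIntegrable f volume u v) {T c : ℝ}
    (h : ∀ s, c ≤ ∫ t in s..s + T, f t) (N : ℕ) :
    N * c ≤ ∫ t in (0:ℝ)..N * T, f t := by
  have hsum := intervalIntegral.sum_integral_adjacent_intervals (f := f) (μ := volume)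
    (a := fun k : ℕ => (k : ℝ) * T) (n := N) fun _ _ => hf _ _
  simp only [Nat.cast_zero, zero_mul] at hsum
  rw [← hsum]
  calc (N : ℝ) * c = ∑ _k ∈ Finset.range N, c := by simp
    _ ≤ _ := Finset.sum_le_sum fun k _ => by
        simpa only [Nat.cast_succ, add_mul, one_mul] using h (k * T)

theorem half_le_average_of_forall_le_average {f : ℝ → ℝ} (hf : Continuous f)
    (hf_nonneg : ∀ t, 0 ≤ f t) {T L α : ℝ} (hT : 0 < T) (hTL : T ≤ L) (hα : 0 ≤ α)
    (h : ∀ s, α ≤ (1 / T) * ∫ t in s..s + T, f t) :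
    α / 2 ≤ (1 / L) * ∫ t in (0:ℝ)..L, f t := by
  have hint : ∀ u v, IntervalIntegrable f volume u v := fun u v => hf.intervalIntegrable u v
  have hblock : ∀ s, α * T ≤ ∫ t in s..s + T, f t := fun s => by
    have := h s
    rwa [one_div, inv_mul_eq_div, le_div_iff₀ hT] at this
  set N := ⌊L / T⌋₊
  have hN_one : 1 ≤ (N : ℝ) := by
    exact_mod_cast Nat.floor_pos.mpr ((one_le_div hT).mpr hTL)
  have hNT_le : N * T ≤ L :=
    (le_div_iff₀ hT).mp (Nat.floor_le (div_nonneg (hT.le.trans hTL) hT.le))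
  have hL_lt : L < (N + 1) * T := (div_lt_iff₀ hT).mp (Nat.lt_floor_add_one _)
  have hfull : N * (α * T) ≤ ∫ t in (0:ℝ)..N * T, f t :=
    mul_le_intervalIntegral_of_forall_le_integral_add hint hblock N
  have htail : 0 ≤ ∫ t in (N * T)..L, f t :=
    intervalIntegral.integral_nonneg hNT_le fun t _ => hf_nonneg t
  have hsplit := intervalIntegral.integral_add_adjacent_intervals (hint 0 (N * T)) (hint _ L)
  rw [one_div, inv_mul_eq_div, le_div_iff₀ (by linarith), ← hsplit]
  nlinarith [mul_nonneg hα hT.le]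

namespace KG

variable {d : ℕ}

theorem GCC.le_average_translate {a : EuclideanSpace ℝ (Fin d) → ℝ} {T α : ℝ}
    (h : GCC a T α) {ξ : EuclideanSpace ℝ (Fin d)} (hξ : ‖ξ‖ = 1)
    (y : EuclideanSpace ℝ (Fin d)) (s : ℝ) :
    α ≤ (1 / T) * ∫ t in s..s + T, a (y + (2 * t) • ξ) := by
  have hshift := intervalIntegral.integral_comp_add_right
    (fun t => a (y + (2 * t) • ξ)) (a := 0) (b := T) s
  rw [zero_add, add_comm T] at hshift
  rw [← hshift]
  convert h (y + (2 * s) • ξ) ξ hξ using 1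
  simp only [avg, add_assoc, ← add_smul, mul_add, add_comm (2 * s)]

theorem avg_comp_smul (a : EuclideanSpace ℝ (Fin d) → ℝ) {η : ℝ} (hη : η ≠ 0) (T : ℝ)
    (x ξ : EuclideanSpace ℝ (Fin d)) :
    avg (fun y => a (η • y)) T x ξ = avg a (η * T) (η • x) ξ := by
  have hsubst := intervalIntegral.integral_comp_mul_left
    (fun t => a (η • x + (2 * t) • ξ)) hη (a := 0) (b := T)
  have hintegrand : ∀ t : ℝ, a (η • (x + (2 * t) • ξ)) = a (η • x + (2 * (η * t)) • ξ) :=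
    fun t => by rw [smul_add, smul_smul, mul_left_comm]
  simp only [mul_zero] at hsubst
  simp only [avg, hintegrand, hsubst, smul_eq_mul]
  field_simp

end KG

open KG in
theorem GCC_uniform_in_eta_general
    (d : ℕ)
    (a : EuclideanSpace ℝ (Fin d) → ℝ)
    (ha_cont : Continuous a)
    (ha_nonneg : ∀ x, 0 ≤ a x)
    (T α : ℝ) (hT : 0 < T) (hα : 0 < α) (hGCC : GCC a T α) :
    ∀ η : ℝ, 1 ≤ η → ∀ x ξ : EuclideanSpace ℝ (Fin d), ‖ξ‖ = 1 →
      α / 2 ≤ (1 / T) * ∫ t in (0:ℝ)..T, a (η • (x + (2 * t) • ξ)) := by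
  intro η hη x ξ hξ
  have hη_pos : 0 < η := one_pos.trans_le hη
  change α / 2 ≤ avg (fun y => a (η • y)) T x ξ
  rw [avg_comp_smul a hη_pos.ne']
  exact half_le_average_of_forall_le_average
    (ha_cont.comp (by fun_prop)) (fun t => ha_nonneg _) hT (le_mul_of_one_le_left hT.le hη)
    hα.le (hGCC.le_average_translate hξ (η • x))

open KG in
/-- If `a` satisfies the geometric control condition with constants
`T > 0` and `α > 0`, then for every `η ≥ 1` the rescaled damping `a_η(x) = a(ηx)` satisfies
it with constants `T` and `α/2`: `(1/T)∫₀ᵀ a_η(x + 2tξ) dt ≥ α/2` for all `x` and all unit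
`ξ`. -/
theorem GCC_uniform_in_eta
    (d : ℕ) (hd : 1 ≤ d)
    (a : EuclideanSpace ℝ (Fin d) → ℝ)
    (ha_cont : Continuous a) (ha_per : ZdPeriodic a)
    (ha_nonneg : ∀ x, 0 ≤ a x) (ha_ne : ∃ x, a x ≠ 0)
    (T α : ℝ) (hT : 0 < T) (hα : 0 < α) (hGCC : GCC a T α) :
    ∀ η : ℝ, 1 ≤ η → ∀ x ξ : EuclideanSpace ℝ (Fin d), ‖ξ‖ = 1 →
      α / 2 ≤ (1 / T) * ∫ t in (0:ℝ)..T, a (η • (x + (2 * t) • ξ)) :=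
  GCC_uniform_in_eta_general d a ha_cont ha_nonneg T α hT hα hGCC
end
end
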